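/- arXiv:2403.13770 — 2 statements merged into one kernel-verified Lean document; each statement's English description precedes it below -/
import Mathlib

section
/- Error reduction lemma: Let $H$ be a Hilbert space with norm $\|\cdot\|_B$, and suppose $\|u - w\|_B^2 = \|u - u_{\tilde{W}}\|_B^2 + \|u_{\tilde{W}} - w\|_B^2$ for all $w \in \tilde{W}$ (Galerkin orthogonality). Assume (i) $\|u - u_{\tilde{W}}\|_B \leq \sqrt{1 - \beta}\, \|u - w\|_B$ for some $\beta \in (0,1)$ and a given $w$, and (ii) $\|u_{\tilde{W}} - \tilde{w}\|_B \leq \gamma\, R$ where $R \leq K \|u - w\|_B$ for constants $\gamma, K > 0$ with $\tilde{w} \in \tilde{W}$. Then $\|u - \tilde{w}\|_B \leq \sqrt{1 - \beta + \gamma^2 K^2}\, \|u - w\|_B$. -/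
/-!
Galerkin orthogonality splits `‖u - w̃‖²` into `‖u - u_W̃‖² + ‖u_W̃ - w̃‖²`. The first term is at
most `(1 - β) ‖u - w‖²` by (i), the second at most `γ² K² ‖u - w‖²` by (ii), and taking square
roots gives the bound.
-/

theorem Submodule.norm_sub_sq_eq_norm_sub_starProjection_sq_add {𝕜 E : Type*} [RCLike 𝕜]
    [NormedAddCommGroup E] [InnerProductSpace 𝕜 E] (K : Submodule 𝕜 E) [K.HasOrthogonalProjection]
    (u : E) {v : E} (hv : v ∈ K) :
    ‖u - v‖ ^ 2 = ‖u - K.starProjection u‖ ^ 2 + ‖K.starProjection u - v‖ ^ 2 := by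
  have horth : inner 𝕜 (u - K.starProjection u) (K.starProjection u - v) = 0 :=
    K.inner_left_of_mem_orthogonal (K.sub_mem (K.starProjection_apply_mem u) hv)
      (K.sub_starProjection_mem_orthogonal u)
  rw [← sub_add_sub_cancel u (K.starProjection u) v, sq, sq, sq,
    norm_add_sq_eq_norm_sq_add_norm_sq_of_inner_eq_zero _ _ horth]

theorem Real.le_sqrt_mul_of_sq_le {x s e : ℝ} (he : 0 ≤ e) (h : x ^ 2 ≤ s * e ^ 2) :
    x ≤ √s * e :=
  calc x ≤ |x| := le_abs_self x
    _ ≤ √(s * e ^ 2) := Real.abs_le_sqrt h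
    _ = √s * e := by rw [Real.sqrt_mul' s (sq_nonneg e), Real.sqrt_sq he]

theorem stmt_9_general {H : Type*} [NormedAddCommGroup H] [InnerProductSpace ℝ H]
    (Wt : Submodule ℝ H) [CompleteSpace Wt]
    (u w : H) (wt : H) (hwt : wt ∈ Wt)
    (β γ K R : ℝ) (hβ : β ∈ Set.Ioo (0 : ℝ) 1) (hγ : 0 < γ)
    (h1 : ‖u - (Wt.orthogonalProjectionOnto u : H)‖ ≤ Real.sqrt (1 - β) * ‖u - w‖)
    (h2 : ‖(Wt.orthogonalProjectionOnto u : H) - wt‖ ≤ γ * R)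
    (h3 : R ≤ K * ‖u - w‖) :
    ‖u - wt‖ ≤ Real.sqrt (1 - β + γ ^ 2 * K ^ 2) * ‖u - w‖ := by
  set p : H := (Wt.orthogonalProjectionOnto u : H)
  have hfar : ‖u - p‖ ^ 2 ≤ (1 - β) * ‖u - w‖ ^ 2 := by
    have := pow_le_pow_left₀ (norm_nonneg _) h1 2
    rwa [mul_pow, Real.sq_sqrt (by linarith [hβ.2])] at this
  have hnear : ‖p - wt‖ ^ 2 ≤ γ ^ 2 * K ^ 2 * ‖u - w‖ ^ 2 := by
    have := pow_le_pow_left₀ (norm_nonneg _) (h2.trans (mul_le_mul_of_nonneg_left h3 hγ.le)) 2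
    rwa [mul_pow, mul_pow, ← mul_assoc] at this
  apply Real.le_sqrt_mul_of_sq_le (norm_nonneg _)
  calc ‖u - wt‖ ^ 2 = ‖u - p‖ ^ 2 + ‖p - wt‖ ^ 2 :=
        Wt.norm_sub_sq_eq_norm_sub_starProjection_sq_add u hwt
    _ ≤ (1 - β + γ ^ 2 * K ^ 2) * ‖u - w‖ ^ 2 := by linarith

/-- Error reduction lemma: with Galerkin orthogonality (via the orthogonal projection
`u_W̃` in the `B`-inner product, which is the inner product of `H`), if
`‖u - u_W̃‖ ≤ √(1-β) ‖u - w‖` and `‖u_W̃ - w̃‖ ≤ γ R` with `R ≤ K ‖u - w‖`, then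
`‖u - w̃‖ ≤ √(1 - β + γ²K²) ‖u - w‖`. -/
theorem stmt_9 {H : Type*} [NormedAddCommGroup H] [InnerProductSpace ℝ H]
    (Wt : Submodule ℝ H) [CompleteSpace Wt]
    (u w : H) (wt : H) (hwt : wt ∈ Wt)
    (β γ K R : ℝ) (hβ : β ∈ Set.Ioo (0 : ℝ) 1) (hγ : 0 < γ) (hK : 0 < K) (hR : 0 ≤ R)
    (h1 : ‖u - (Wt.orthogonalProjectionOnto u : H)‖ ≤ Real.sqrt (1 - β) * ‖u - w‖)
    (h2 : ‖(Wt.orthogonalProjectionOnto u : H) - wt‖ ≤ γ * R)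
    (h3 : R ≤ K * ‖u - w‖) :
    ‖u - wt‖ ≤ Real.sqrt (1 - β + γ ^ 2 * K ^ 2) * ‖u - w‖ :=
  stmt_9_general Wt u w wt hwt β γ K R hβ hγ h1 h2 h3
end

section
/- Lower bound for restricted residual via frame and approximation: let $(\psi_\lambda)_{\lambda \in \Theta}$ be a frame of a Hilbert space $V$ with lower frame bound $c_\Psi$, let $\xi \in V'$, and let $\mathbf{r} = (\langle \xi, \psi_\lambda\rangle)_{\lambda \in \Theta}$. If $\hat{\mathbf{r}} \in \ell_2(\Theta)$ satisfies $\|\mathbf{r} - \hat{\mathbf{r}}\| \leq \zeta \|\mathbf{r}\|$ with $\zeta \in (0,1)$ and $\Lambda \subset \Theta$ satisfies $\|\hat{\mathbf{r}}|_\Lambda\| \geq \omega_0 \|\hat{\mathbf{r}}\|$ with $(1+\omega_0)\zeta < \omega_0 \leq 1$, then $\|\mathbf{r}|_\Lambda\| \geq (\omega_0 - (1+\omega_0)\zeta)\, c_\Psi\, \|\xi\|_{V'}$. -/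
/-!
The lower frame bound gives `c_Ψ ‖ξ‖ ≤ ‖r‖`, so it suffices to bound `‖r|_Λ‖` below by a multiple
of `‖r‖`. Two triangle inequalities in `ℓ²` do this: `‖r‖ ≤ ‖r̂‖ + ζ‖r‖` gives `‖r̂‖ ≥ (1 - ζ)‖r‖`,
and restricting to `Λ` gives
`‖r|_Λ‖ ≥ ‖r̂|_Λ‖ - ‖(r - r̂)|_Λ‖ ≥ ω₀ ‖r̂‖ - ζ‖r‖ ≥ (ω₀ (1 - ζ) - ζ) ‖r‖`.
-/

theorem memℓp_two_iff_summable_sq {ι : Type*} {f : ι → ℝ} :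
    Memℓp f 2 ↔ Summable fun i => f i ^ 2 := by
  rw [memℓp_gen_iff (by norm_num)]
  norm_num

theorem sqrt_tsum_sq_eq_norm {ι : Type*} {f : ι → ℝ} (hf : Memℓp f 2) :
    √(∑' i, f i ^ 2) = ‖(⟨f, hf⟩ : lp (fun _ : ι => ℝ) 2)‖ := by
  rw [lp.norm_eq_tsum_rpow (by norm_num), Real.sqrt_eq_rpow]
  norm_num

theorem sqrt_tsum_sq_le_add_sqrt_tsum_sq_sub {ι : Type*} {f g : ι → ℝ}
    (hf : Summable fun i => f i ^ 2) (hg : Summable fun i => g i ^ 2) :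
    √(∑' i, f i ^ 2) ≤ √(∑' i, g i ^ 2) + √(∑' i, (f i - g i) ^ 2) := by
  have hf' := memℓp_two_iff_summable_sq.2 hf
  have hg' := memℓp_two_iff_summable_sq.2 hg
  rw [sqrt_tsum_sq_eq_norm hf', sqrt_tsum_sq_eq_norm hg',
    sqrt_tsum_sq_eq_norm (f := fun i => f i - g i) (hf'.sub hg')]
  exact norm_le_norm_add_norm_sub' (⟨f, hf'⟩ : lp (fun _ : ι => ℝ) 2) ⟨g, hg'⟩

theorem mul_sqrt_tsum_sq_le_sqrt_tsum_subtype_sq {ι : Type*} (r r' : ι → ℝ)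
    (hr' : Summable fun i => r' i ^ 2) {ζ ω : ℝ} (hω : 0 ≤ ω)
    (happrox : √(∑' i, (r i - r' i) ^ 2) ≤ ζ * √(∑' i, r i ^ 2)) (s : Set ι)
    (hbulk : ω * √(∑' i, r' i ^ 2) ≤ √(∑' i : s, r' i ^ 2)) :
    (ω - (1 + ω) * ζ) * √(∑' i, r i ^ 2) ≤ √(∑' i : s, r i ^ 2) := by
  by_cases hr : Summable fun i => r i ^ 2
  swap
  · rw [tsum_eq_zero_of_not_summable hr, Real.sqrt_zero, mul_zero]
    positivity
  have hd : Summable fun i => (r i - r' i) ^ 2 := memℓp_two_iff_summable_sq.1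
    ((memℓp_two_iff_summable_sq.2 hr).sub (memℓp_two_iff_summable_sq.2 hr'))
  have h_total := sqrt_tsum_sq_le_add_sqrt_tsum_sq_sub hr hr'
  have h_restrict : √(∑' i : s, r' i ^ 2) ≤
      √(∑' i : s, r i ^ 2) + √(∑' i : s, (r i - r' i) ^ 2) := by
    simpa only [sub_sq_comm] using sqrt_tsum_sq_le_add_sqrt_tsum_sq_sub
      (f := fun i : s => r' i) (g := fun i : s => r i) (hr'.subtype s) (hr.subtype s)
  have h_err : √(∑' i : s, (r i - r' i) ^ 2) ≤ √(∑' i, (r i - r' i) ^ 2) :=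
    Real.sqrt_le_sqrt (hd.tsum_subtype_le _ s fun _ => sq_nonneg _)
  nlinarith [mul_le_mul_of_nonneg_left h_total hω]

theorem stmt_12_general {V : Type*} [NormedAddCommGroup V] [InnerProductSpace ℝ V]
    {Θ : Type*} (ψ : Θ → V)
    (cΨ CΨ : ℝ)
    (hframe : ∀ ξ : V →L[ℝ] ℝ,
      cΨ ^ 2 * ‖ξ‖ ^ 2 ≤ ∑' lam : Θ, (ξ (ψ lam)) ^ 2 ∧
      ∑' lam : Θ, (ξ (ψ lam)) ^ 2 ≤ CΨ ^ 2 * ‖ξ‖ ^ 2)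
    (ξ : V →L[ℝ] ℝ) (rh : Θ → ℝ) (hrh : Summable fun lam => rh lam ^ 2)
    (ζ ω0 : ℝ) (hω : ω0 ∈ Set.Ioc (0 : ℝ) 1)
    (hcomp : (1 + ω0) * ζ < ω0)
    (happrox : Real.sqrt (∑' lam : Θ, (ξ (ψ lam) - rh lam) ^ 2) ≤
      ζ * Real.sqrt (∑' lam : Θ, (ξ (ψ lam)) ^ 2))
    (Λ : Set Θ)
    (hbulk : ω0 * Real.sqrt (∑' lam : Θ, rh lam ^ 2) ≤
      Real.sqrt (∑' lam : Λ, rh lam ^ 2)) :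
    (ω0 - (1 + ω0) * ζ) * cΨ * ‖ξ‖ ≤ Real.sqrt (∑' lam : Λ, (ξ (ψ lam)) ^ 2) := by
  have h_lower_frame : cΨ * ‖ξ‖ ≤ √(∑' lam, ξ (ψ lam) ^ 2) :=
    (le_abs_self _).trans (Real.abs_le_sqrt (by simpa only [mul_pow] using (hframe ξ).1))
  calc (ω0 - (1 + ω0) * ζ) * cΨ * ‖ξ‖ = (ω0 - (1 + ω0) * ζ) * (cΨ * ‖ξ‖) := mul_assoc _ _ _
    _ ≤ (ω0 - (1 + ω0) * ζ) * √(∑' lam, ξ (ψ lam) ^ 2) :=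
      mul_le_mul_of_nonneg_left h_lower_frame (by linarith)
    _ ≤ _ := mul_sqrt_tsum_sq_le_sqrt_tsum_subtype_sq _ rh hrh hω.1.le happrox Λ hbulk

/-- Lower bound for the restricted residual via the frame and the approximation:
with `r = (⟨ξ,ψ_λ⟩)_λ`, if `‖r - r̂‖ ≤ ζ‖r‖` and `‖r̂|_Λ‖ ≥ ω₀‖r̂‖` with
`(1+ω₀)ζ < ω₀ ≤ 1`, then `‖r|_Λ‖ ≥ (ω₀ - (1+ω₀)ζ) c_Ψ ‖ξ‖_{V'}`. -/
theorem stmt_12 {V : Type*} [NormedAddCommGroup V] [InnerProductSpace ℝ V] [CompleteSpace V]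
    {Θ : Type*} [Countable Θ] (ψ : Θ → V)
    (cΨ CΨ : ℝ) (hc : 0 < cΨ) (hC : 0 < CΨ)
    (hframe : ∀ ξ : V →L[ℝ] ℝ,
      cΨ ^ 2 * ‖ξ‖ ^ 2 ≤ ∑' lam : Θ, (ξ (ψ lam)) ^ 2 ∧
      ∑' lam : Θ, (ξ (ψ lam)) ^ 2 ≤ CΨ ^ 2 * ‖ξ‖ ^ 2)
    (ξ : V →L[ℝ] ℝ) (rh : Θ → ℝ) (hrh : Summable fun lam => rh lam ^ 2)
    (ζ ω0 : ℝ) (hζ : ζ ∈ Set.Ioo (0 : ℝ) 1) (hω : ω0 ∈ Set.Ioc (0 : ℝ) 1)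
    (hcomp : (1 + ω0) * ζ < ω0)
    (happrox : Real.sqrt (∑' lam : Θ, (ξ (ψ lam) - rh lam) ^ 2) ≤
      ζ * Real.sqrt (∑' lam : Θ, (ξ (ψ lam)) ^ 2))
    (Λ : Set Θ)
    (hbulk : ω0 * Real.sqrt (∑' lam : Θ, rh lam ^ 2) ≤
      Real.sqrt (∑' lam : Λ, rh lam ^ 2)) :
    (ω0 - (1 + ω0) * ζ) * cΨ * ‖ξ‖ ≤ Real.sqrt (∑' lam : Λ, (ξ (ψ lam)) ^ 2) :=
  stmt_12_general ψ cΨ CΨ hframe ξ rh hrh ζ ω0 hω hcomp happrox Λ hbulk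
end
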